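/- Let H be a 2-edge-connected signed graph such that |E_N(H)| ≥ 2 and H − E_N(H) is a spanning tree of H. Then for every negative edge e ∈ E_N(H), H has a signed circuit containing all edges of S_H(e). -/

import Mathlib

open scoped Classical

noncomputable section

/-- A signed (multi)graph: a finite multigraph (loops and multiple edges allowed)
together with a sign on each edge (`neg e = true` means `e` is negative). -/
structure SignedMultigraph where
  V : Type
  E : Type
  [fintypeV : Fintype V]
  [fintypeE : Fintype E]
  ends : E → Sym2 V
  neg : E → Bool

attribute [instance] SignedMultigraph.fintypeV SignedMultigraph.fintypeE

namespace SignedMultigraph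

variable (G : SignedMultigraph)

/-- The vertices incident with at least one edge of `S`. -/
def support (S : Finset G.E) : Finset G.V :=
  Finset.univ.filter fun v => ∃ e ∈ S, v ∈ G.ends e

/-- Degree of `v` in the edge set `S`; loops count twice. -/
def degIn (S : Finset G.E) (v : G.V) : ℕ :=
  ∑ e ∈ S, (if G.ends e = Sym2.diag v then 2 else if v ∈ G.ends e then 1 else 0)

/-- `u` and `v` are joined by an edge of `S`. -/
def Adj (S : Finset G.E) (u v : G.V) : Prop := ∃ e ∈ S, G.ends e = s(u, v)

/-- Reachability using only edges of `S`. -/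
def Reach (S : Finset G.E) : G.V → G.V → Prop := Relation.ReflTransGen (G.Adj S)

/-- The subgraph with edge set `S` (and vertex set its support) is connected. -/
def ConnOn (S : Finset G.E) : Prop :=
  ∀ u ∈ G.support S, ∀ v ∈ G.support S, G.Reach S u v

/-- The whole signed graph is connected. -/
def Connected : Prop := Nonempty G.V ∧ ∀ u v : G.V, G.Reach Finset.univ u v

/-- The negative edges among `S`. -/
def negEdges (S : Finset G.E) : Finset G.E := S.filter fun e => G.neg e = true

/-- A circuit: a (nonempty) connected 2-regular subgraph, given by its edge set. -/
def IsCircuit (S : Finset G.E) : Prop :=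
  S.Nonempty ∧ G.ConnOn S ∧ ∀ v ∈ G.support S, G.degIn S v = 2

/-- A balanced circuit: a circuit with an even number of negative edges. -/
def IsBalancedCircuit (S : Finset G.E) : Prop :=
  G.IsCircuit S ∧ Even (G.negEdges S).card

/-- An unbalanced circuit: a circuit with an odd number of negative edges. -/
def IsUnbalancedCircuit (S : Finset G.E) : Prop :=
  G.IsCircuit S ∧ ¬ Even (G.negEdges S).card

/-- A short barbell: two unbalanced circuits meeting at exactly one vertex. -/
def IsShortBarbell (S : Finset G.E) : Prop :=
  ∃ C₁ C₂ : Finset G.E, G.IsUnbalancedCircuit C₁ ∧ G.IsUnbalancedCircuit C₂ ∧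
    Disjoint C₁ C₂ ∧ (G.support C₁ ∩ G.support C₂).card = 1 ∧ S = C₁ ∪ C₂

/-- A path with (distinct) ends `u` and `v`, given by its edge set. -/
def IsPath (P : Finset G.E) (u v : G.V) : Prop :=
  P.Nonempty ∧ G.ConnOn P ∧ u ≠ v ∧ u ∈ G.support P ∧ v ∈ G.support P ∧
    G.degIn P u = 1 ∧ G.degIn P v = 1 ∧
    ∀ w ∈ G.support P, w ≠ u → w ≠ v → G.degIn P w = 2

/-- A long barbell: two vertex-disjoint unbalanced circuits joined by a path
meeting the circuits only at its ends. -/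
def IsLongBarbell (S : Finset G.E) : Prop :=
  ∃ (C₁ C₂ P : Finset G.E) (u v : G.V),
    G.IsUnbalancedCircuit C₁ ∧ G.IsUnbalancedCircuit C₂ ∧
    Disjoint (G.support C₁) (G.support C₂) ∧
    G.IsPath P u v ∧
    G.support P ∩ G.support C₁ = {u} ∧ G.support P ∩ G.support C₂ = {v} ∧
    Disjoint P C₁ ∧ Disjoint P C₂ ∧
    S = C₁ ∪ C₂ ∪ P

/-- A signed circuit: a balanced circuit, a short barbell, or a long barbell. -/
def IsSignedCircuit (S : Finset G.E) : Prop :=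
  G.IsBalancedCircuit S ∨ G.IsShortBarbell S ∨ G.IsLongBarbell S

/-- The number of members of the family `F` containing the edge `e`. -/
def coverCount (F : Multiset (Finset G.E)) (e : G.E) : ℕ :=
  (F.filter fun S => e ∈ S).card

/-- The total length of the family `F`. -/
def coverLength (F : Multiset (Finset G.E)) : ℕ := (F.map Finset.card).sum

/-- A signed circuit cover: every edge is in at least one member. -/
def IsSignedCircuitCover (F : Multiset (Finset G.E)) : Prop :=
  (∀ S ∈ F, G.IsSignedCircuit S) ∧ ∀ e : G.E, 1 ≤ G.coverCount F e

/-- The length of a shortest signed circuit cover. -/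
def SCC : ℕ := sInf { n | ∃ F, G.IsSignedCircuitCover F ∧ G.coverLength F = n }

/-- Whether edge `e` has exactly one endpoint in the vertex set `A`. -/
def crossesB (A : Finset G.V) (e : G.E) : Bool :=
  Sym2.lift ⟨fun x y => Bool.xor (decide (x ∈ A)) (decide (y ∈ A)),
    fun x y => Bool.xor_comm _ _⟩ (G.ends e)

/-- Sign of `e` (`true` = negative) after switching at every vertex of `A`. -/
def negAfter (A : Finset G.V) (e : G.E) : Bool :=
  Bool.xor (G.neg e) (G.crossesB A e)

/-- Minimum number of negative edges in `S` over all switchings. -/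
def negOf (S : Finset G.E) : ℕ :=
  sInf { n | ∃ A : Finset G.V, (S.filter fun e => G.negAfter A e = true).card = n }

/-- The negativeness of `G`. -/
def negativeness : ℕ := G.negOf Finset.univ

/-- The edges of `S` with exactly one endpoint in `U`: the edge boundary `δ(U)` inside `S`. -/
def boundary (S : Finset G.E) (U : Finset G.V) : Finset G.E :=
  S.filter fun e => G.crossesB U e = true

/-- `b` is a bridge of the subgraph with edge set `S`. -/
def IsBridge (S : Finset G.E) (b : G.E) : Prop :=
  ∃ U : Finset G.V, G.boundary S U = {b}

/-- The subgraph with edge set `S` is bridgeless. -/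
def Bridgeless (S : Finset G.E) : Prop := ∀ b ∈ S, ¬ G.IsBridge S b

/-- `G` is 2-edge-connected. -/
def TwoEdgeConnected : Prop :=
  G.Connected ∧ ∀ b : G.E, ¬ G.IsBridge Finset.univ b

/-- Edges of `S` lying in the same component (of the subgraph with edge set `S`)
as the vertex `x`. -/
def compEdges (S : Finset G.E) (x : G.V) : Finset G.E :=
  S.filter fun e => ∃ u, u ∈ G.ends e ∧ G.Reach S x u

/-- A g-bridge: a bridge such that both components of `G - b` have even negativeness. -/
def IsGBridge (b : G.E) : Prop :=
  G.IsBridge Finset.univ b ∧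
    ∃ x y : G.V, G.ends b = s(x, y) ∧
      Even (G.negOf (G.compEdges (Finset.univ.erase b) x)) ∧
      Even (G.negOf (G.compEdges (Finset.univ.erase b) y))

/-- `G` has no g-bridge (in any of its components). -/
def GBridgeless : Prop := ∀ b : G.E, ¬ G.IsGBridge b

/-- Member of `B_g(G)`: a bridge such that at least one component of `G - b`
contains an odd number of negative edges. -/
def IsBgBridge (b : G.E) : Prop :=
  G.IsBridge Finset.univ b ∧
    ∃ x : G.V, x ∈ G.ends b ∧
      ¬ Even (G.negEdges (G.compEdges (Finset.univ.erase b) x)).card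

/-- Member of `B_s(G)`: a bridge such that each of the two components of `G - b`
contains a negative edge. -/
def IsSBridge (b : G.E) : Prop :=
  G.IsBridge Finset.univ b ∧
    ∃ x y : G.V, G.ends b = s(x, y) ∧
      (G.negEdges (G.compEdges (Finset.univ.erase b) x)).Nonempty ∧
      (G.negEdges (G.compEdges (Finset.univ.erase b) y)).Nonempty

/-- `G` is s-bridgeless: every edge lies in some signed circuit. -/
def SBridgeless : Prop := ∀ e : G.E, ∃ S : Finset G.E, G.IsSignedCircuit S ∧ e ∈ S

/-- `{e, f}` is a 2-edge-cut of `G`. -/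
def IsTwoEdgeCut (e f : G.E) : Prop :=
  e ≠ f ∧ ∃ U : Finset G.V, G.boundary Finset.univ U = {e, f}

/-- `S_G(e) = {e} ∪ {f : {e,f} is a 2-edge-cut of G}`. -/
def SSet (e : G.E) : Finset G.E :=
  insert e (Finset.univ.filter fun f => G.IsTwoEdgeCut e f)

/-- The edge set `R` spans an acyclic subgraph (every nonempty subset has a
vertex of degree one). -/
def AcyclicSet (R : Finset G.E) : Prop :=
  ∀ F ⊆ R, F.Nonempty → ∃ v : G.V, G.degIn F v = 1

/-- `T` is the edge set of a spanning tree of `G`. -/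
def IsSpanningTree (T : Finset G.E) : Prop :=
  G.AcyclicSet T ∧ Nonempty G.V ∧ ∀ u v : G.V, G.Reach T u v

/-- `G` is eulerian: connected with all degrees even. -/
def Eulerian : Prop :=
  G.Connected ∧ ∀ v : G.V, Even (G.degIn Finset.univ v)

/-- The edge set `S` spans an eulerian subgraph. -/
def IsEulerianSub (S : Finset G.E) : Prop :=
  S.Nonempty ∧ G.ConnOn S ∧ ∀ v ∈ G.support S, Even (G.degIn S v)

/-- The vertex class of `v` after contracting each member of `ℬ`. -/
def classOf (ℬ : Finset (Finset G.E)) (v : G.V) : Finset G.V :=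
  Finset.univ.filter fun u => u = v ∨ ∃ B ∈ ℬ, v ∈ G.support B ∧ u ∈ G.support B

/-- Degree, in edge set `F`, of the contracted class of `v`. -/
def classDeg (ℬ : Finset (Finset G.E)) (F : Finset G.E) (v : G.V) : ℕ :=
  ∑ u ∈ G.classOf ℬ v, G.degIn F u

/-- `ℬ` witnesses that the subgraph with edge set `S` is a generalized barbell:
`ℬ` is a family of vertex-disjoint eulerian subgraphs of `S`, the contraction
`S/(∪ℬ)` is acyclic, and for every vertex `x` of the contracted graph,
`|E_N(B_x)| ≡ |δ(V(B_x))| (mod 2)`. -/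
def GenBarbellWitness (S : Finset G.E) (ℬ : Finset (Finset G.E)) : Prop :=
  (∀ B ∈ ℬ, B ⊆ S ∧ G.IsEulerianSub B) ∧
  (∀ B₁ ∈ ℬ, ∀ B₂ ∈ ℬ, B₁ ≠ B₂ → Disjoint (G.support B₁) (G.support B₂)) ∧
  (∀ F ⊆ S \ ℬ.sup id, F.Nonempty → ∃ v : G.V, G.classDeg ℬ F v = 1) ∧
  (∀ B ∈ ℬ, (G.negEdges B).card ≡ (G.boundary S (G.support B)).card [MOD 2]) ∧
  (∀ v ∈ G.support S, (∀ B ∈ ℬ, v ∉ G.support B) → Even (G.boundary S {v}).card)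

/-- The subgraph with edge set `S` is a generalized barbell. -/
def IsGenBarbell (S : Finset G.E) : Prop := ∃ ℬ, G.GenBarbellWitness S ℬ

end SignedMultigraph

/-!
Let `T = H − E_N(H)`, pick a second negative edge `e'`, and let `C`, `C'` be the fundamental
circuits of `e`, `e'` with respect to the tree `T`; each has exactly one negative edge, so both are
unbalanced. If `C` and `C'` share an edge, `C ∆ C'` is a balanced circuit: an even subgraph is
determined by its edges outside the forest `T`, so a component of `C ∆ C'` missing `e'` would be
`C` itself. Otherwise uniqueness of tree paths lets `C` and `C'` meet in at most one vertex, which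
gives a short barbell, or a long barbell through a shortest path joining them. In each case the
signed circuit contains an even subgraph through `e`, and an even subgraph meets every 2-edge-cut
in an even number of edges, hence contains `S_H(e)`.
-/

open Finset
open scoped symmDiff

namespace SignedMultigraph

variable {G : SignedMultigraph}

def endCount (G : SignedMultigraph) (e : G.E) (v : G.V) : ℕ :=
  if G.ends e = Sym2.diag v then 2 else if v ∈ G.ends e then 1 else 0

lemma exists_ends_eq (e : G.E) : ∃ a b, G.ends e = s(a, b) := by
  induction G.ends e using Sym2.inductionOn with
  | _ a b => exact ⟨a, b, rfl⟩

lemma degIn_eq_sum (S : Finset G.E) (v : G.V) : G.degIn S v = ∑ e ∈ S, G.endCount e v := rfl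

lemma endCount_eq_zero {e : G.E} {v : G.V} (h : v ∉ G.ends e) : G.endCount e v = 0 := by
  have hdiag : G.ends e ≠ Sym2.diag v := fun hd => h (hd ▸ Sym2.mem_mk_left v v)
  simp [endCount, hdiag, h]

lemma endCount_pos_iff {e : G.E} {v : G.V} : 0 < G.endCount e v ↔ v ∈ G.ends e := by
  refine ⟨fun h => by_contra fun hv => by simp [endCount_eq_zero hv] at h, fun hv => ?_⟩
  unfold endCount; split_ifs <;> omega

lemma endCount_of_loop {e : G.E} {a : G.V} (h : G.ends e = s(a, a)) (v : G.V) :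
    G.endCount e v = if v = a then 2 else 0 := by
  by_cases hv : v = a
  · subst hv; simp [endCount, h, Sym2.diag]
  · have hdiag : s(a, a) ≠ Sym2.diag v := by simp [Sym2.diag, Ne.symm hv]
    simp [endCount, h, hdiag, hv, Sym2.mem_iff]

lemma endCount_of_ne {e : G.E} {a b : G.V} (hab : a ≠ b) (h : G.ends e = s(a, b)) (v : G.V) :
    G.endCount e v = (if v = a then 1 else 0) + (if v = b then 1 else 0) := by
  have hdiag : s(a, b) ≠ Sym2.diag v := by
    simp only [Sym2.diag, ne_eq, Sym2.eq_iff]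
    rintro (⟨rfl, rfl⟩ | ⟨rfl, rfl⟩) <;> exact hab rfl
  by_cases hva : v = a <;> by_cases hvb : v = b <;> simp_all [endCount, Sym2.mem_iff]

lemma endCount_le_degIn {S : Finset G.E} {e : G.E} (he : e ∈ S) (v : G.V) :
    G.endCount e v ≤ G.degIn S v :=
  single_le_sum (f := fun e => G.endCount e v) (fun _ _ => Nat.zero_le _) he

lemma mem_support {S : Finset G.E} {v : G.V} :
    v ∈ G.support S ↔ ∃ e ∈ S, v ∈ G.ends e := by
  simp [support]

lemma degIn_pos_iff {S : Finset G.E} {v : G.V} : 0 < G.degIn S v ↔ v ∈ G.support S := by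
  simp only [degIn_eq_sum, sum_pos_iff, endCount_pos_iff, mem_support]

lemma degIn_insert {S : Finset G.E} {e : G.E} (h : e ∉ S) (v : G.V) :
    G.degIn (insert e S) v = G.endCount e v + G.degIn S v :=
  sum_insert h

lemma degIn_sdiff_add {S F : Finset G.E} (h : F ⊆ S) (v : G.V) :
    G.degIn (S \ F) v + G.degIn F v = G.degIn S v :=
  sum_sdiff h

lemma degIn_symmDiff_add (F C : Finset G.E) (v : G.V) :
    G.degIn (F ∆ C) v + 2 * G.degIn (F ∩ C) v = G.degIn F v + G.degIn C v := by
  rw [two_mul, ← add_assoc, symmDiff_eq_sup_sdiff_inf, sup_eq_union, inf_eq_inter,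
    degIn_sdiff_add inter_subset_union]
  exact sum_union_inter

lemma reach_symm {S : Finset G.E} {u v : G.V} (h : G.Reach S u v) : G.Reach S v u :=
  Relation.ReflTransGen.mono
    (fun _ _ ⟨e, he, hends⟩ => ⟨e, he, hends.trans Sym2.eq_swap⟩) _ _
    (Relation.reflTransGen_swap.mpr h)

lemma reach_mono {S S' : Finset G.E} (h : S ⊆ S') {u v : G.V} (hr : G.Reach S u v) :
    G.Reach S' u v :=
  Relation.ReflTransGen.mono (fun _ _ ⟨e, he, hends⟩ => ⟨e, h he, hends⟩) _ _ hr

lemma reach_of_mem_ends {S : Finset G.E} {e : G.E} (he : e ∈ S) {u v : G.V}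
    (hu : u ∈ G.ends e) (hv : v ∈ G.ends e) : G.Reach S u v := by
  obtain ⟨a, b, hab⟩ := exists_ends_eq e
  have hadj : G.Adj S a b := ⟨e, he, hab⟩
  rw [hab, Sym2.mem_iff] at hu hv
  rcases hu with rfl | rfl <;> rcases hv with rfl | rfl
  exacts [.refl, .single hadj, reach_symm (.single hadj), .refl]

def EvenDegrees (G : SignedMultigraph) (S : Finset G.E) : Prop := ∀ v, Even (G.degIn S v)

lemma EvenDegrees.symmDiff {F C : Finset G.E} (hF : G.EvenDegrees F) (hC : G.EvenDegrees C) :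
    G.EvenDegrees (F ∆ C) := fun v => by
  have h := degIn_symmDiff_add F C v
  have := hF v; have := hC v
  grind

lemma EvenDegrees.sdiff {S F : Finset G.E} (hS : G.EvenDegrees S) (hF : G.EvenDegrees F)
    (h : F ⊆ S) : G.EvenDegrees (S \ F) := fun v => by
  have h := degIn_sdiff_add h v
  have := hS v; have := hF v
  grind

lemma reach_of_mem_compEdges {S : Finset G.E} {x : G.V} {e : G.E} (he : e ∈ G.compEdges S x)
    {u : G.V} (hu : u ∈ G.ends e) : G.Reach S x u := by
  obtain ⟨heS, z, hz, hxz⟩ := mem_filter.mp he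
  exact hxz.trans (reach_of_mem_ends heS hz hu)

lemma mem_compEdges {S : Finset G.E} {x : G.V} {e : G.E} (he : e ∈ S) (hx : x ∈ G.ends e) :
    e ∈ G.compEdges S x :=
  mem_filter.mpr ⟨he, x, hx, .refl⟩

lemma EvenDegrees.compEdges {S : Finset G.E} (hS : G.EvenDegrees S) (x : G.V) :
    G.EvenDegrees (G.compEdges S x) := fun v => by
  by_cases hxv : G.Reach S x v
  · convert hS v using 1
    refine sum_subset (filter_subset _ _) fun e heS he => endCount_eq_zero fun hv => he ?_
    exact mem_filter.mpr ⟨heS, v, hv, hxv⟩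
  · rw [show G.degIn (G.compEdges S x) v = 0 from
      sum_eq_zero fun e he => endCount_eq_zero fun hv => hxv (reach_of_mem_compEdges he hv)]
    exact ⟨0, rfl⟩

lemma connOn_of_compEdges_eq {S : Finset G.E} {x : G.V} (h : G.compEdges S x = S) :
    G.ConnOn S := by
  have hx : ∀ u ∈ G.support S, G.Reach S x u := fun u hu => by
    obtain ⟨e, he, hue⟩ := mem_support.mp hu
    rw [← h] at he
    exact reach_of_mem_compEdges he hue
  exact fun u hu v hv => (reach_symm (hx u hu)).trans (hx v hv)

lemma IsCircuit.degIn_eq {C : Finset G.E} (hC : G.IsCircuit C) (v : G.V) :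
    G.degIn C v = if v ∈ G.support C then 2 else 0 := by
  split_ifs with hv
  · exact hC.2.2 v hv
  · exact Nat.eq_zero_of_not_pos (mt degIn_pos_iff.mp hv)

lemma IsCircuit.evenDegrees {C : Finset G.E} (hC : G.IsCircuit C) : G.EvenDegrees C :=
  fun v => by rw [hC.degIn_eq]; split_ifs <;> decide

lemma IsCircuit.support_nonempty {C : Finset G.E} (hC : G.IsCircuit C) :
    (G.support C).Nonempty := by
  obtain ⟨g, hg⟩ := hC.1
  obtain ⟨a, b, hab⟩ := exists_ends_eq g
  exact ⟨a, mem_support.mpr ⟨g, hg, hab ▸ Sym2.mem_mk_left a b⟩⟩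

lemma card_boundary_mod_two (S : Finset G.E) (U : Finset G.V) :
    #(G.boundary S U) % 2 = (∑ v ∈ U, G.degIn S v) % 2 := by
  have hedge (e : G.E) :
      (∑ v ∈ U, G.endCount e v) % 2 = (if G.crossesB U e = true then 1 else 0) % 2 := by
    obtain ⟨a, b, hab⟩ := exists_ends_eq e
    have hcross : G.crossesB U e = Bool.xor (decide (a ∈ U)) (decide (b ∈ U)) := by
      rw [crossesB, hab, Sym2.lift_mk]
    by_cases hab' : a = b
    · subst hab'
      simp only [endCount_of_loop hab, sum_ite_eq', hcross]
      by_cases ha : a ∈ U <;> simp [ha]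
    · simp only [endCount_of_ne hab' hab, sum_add_distrib, sum_ite_eq', hcross]
      by_cases ha : a ∈ U <;> by_cases hb : b ∈ U <;> simp [ha, hb]
  simp only [degIn_eq_sum]
  rw [sum_comm, sum_nat_mod, sum_congr rfl fun e _ => hedge e, ← sum_nat_mod, boundary,
    card_filter]

lemma SSet_subset_of_evenDegrees {W : Finset G.E} (hW : G.EvenDegrees W) {e : G.E}
    (he : e ∈ W) : G.SSet e ⊆ W := by
  intro f hf
  rcases mem_insert.mp hf with rfl | hf
  · exact he
  obtain ⟨-, U, hU⟩ := (mem_filter.mp hf).2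
  by_contra hfW
  have hcut : G.boundary W U = {e} := by
    ext g
    have hg := congrArg (g ∈ ·) hU
    simp only [boundary, mem_filter, mem_univ, true_and, mem_insert, mem_singleton,
      eq_iff_iff] at hg ⊢
    constructor
    · rintro ⟨hgW, hgU⟩
      rcases hg.mp hgU with rfl | rfl
      exacts [rfl, absurd hgW hfW]
    · rintro rfl
      exact ⟨he, hg.mpr (.inl rfl)⟩
  have hpar := card_boundary_mod_two W U
  rw [hcut, card_singleton, sum_nat_mod, sum_eq_zero fun v _ => Nat.even_iff.mp (hW v)] at hpar
  exact absurd hpar (by decide)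

/-- `F ∆ C` is an even subgraph of the forest `T`, hence empty. -/
lemma AcyclicSet.eq_of_degIn_mod_two {T F C : Finset G.E} (hT : G.AcyclicSet T)
    (hagree : ∀ g ∉ T, g ∈ F ↔ g ∈ C) (hdeg : ∀ v, G.degIn F v % 2 = G.degIn C v % 2) :
    F = C := by
  by_contra hne
  have hsub : F ∆ C ⊆ T := fun g hg => by
    by_contra hgT
    rcases mem_symmDiff.mp hg with ⟨h₁, h₂⟩ | ⟨h₁, h₂⟩
    exacts [h₂ ((hagree g hgT).mp h₁), h₂ ((hagree g hgT).mpr h₁)]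
  obtain ⟨v, hv⟩ := hT _ hsub (nonempty_iff_ne_empty.mpr (mt symmDiff_eq_bot.mp hne))
  have h := degIn_symmDiff_add F C v
  have := hdeg v
  omega

lemma AcyclicSet.eq_of_evenDegrees {T F C : Finset G.E} (hT : G.AcyclicSet T)
    (hF : G.EvenDegrees F) (hC : G.EvenDegrees C) (hagree : ∀ g ∉ T, g ∈ F ↔ g ∈ C) :
    F = C :=
  hT.eq_of_degIn_mod_two hagree fun v => by
    rw [Nat.even_iff.mp (hF v), Nat.even_iff.mp (hC v)]

lemma IsPath.degIn_mod_two {P : Finset G.E} {u v : G.V} (hP : G.IsPath P u v) (x : G.V) :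
    G.degIn P x % 2 = ((if x = u then 1 else 0) + (if x = v then 1 else 0)) % 2 := by
  obtain ⟨-, -, huv, -, -, hu, hv, hdeg⟩ := hP
  by_cases hxu : x = u
  · subst hxu; simp [hu, huv]
  by_cases hxv : x = v
  · subst hxv; simp [hv, hxu]
  by_cases hx : x ∈ G.support P
  · simp [hdeg x hx hxu hxv, hxu, hxv]
  · simp [Nat.eq_zero_of_not_pos (mt degIn_pos_iff.mp hx), hxu, hxv]

lemma AcyclicSet.eq_of_isPath {T P Q : Finset G.E} (hT : G.AcyclicSet T) (hPT : P ⊆ T)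
    (hQT : Q ⊆ T) {u v : G.V} (hP : G.IsPath P u v) (hQ : G.IsPath Q u v) : P = Q :=
  hT.eq_of_degIn_mod_two (fun _ hg => iff_of_false (mt (@hPT _) hg) (mt (@hQT _) hg))
    fun x => by rw [hP.degIn_mod_two, hQ.degIn_mod_two]

inductive IsWalk (G : SignedMultigraph) (S : Finset G.E) :
    G.V → G.V → List G.V → List G.E → Prop
  | nil (v : G.V) : IsWalk G S v v [v] []
  | cons {u v w : G.V} {vs : List G.V} {es : List G.E} (e : G.E)
      (he : e ∈ S) (hends : G.ends e = s(u, v)) (hw : IsWalk G S v w vs es) :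
      IsWalk G S u w (u :: vs) (e :: es)

variable {S : Finset G.E}

namespace IsWalk

variable {u w : G.V} {vs : List G.V} {es : List G.E}

lemma of_reach (h : G.Reach S u w) : ∃ vs es, G.IsWalk S u w vs es := by
  induction h using Relation.ReflTransGen.head_induction_on with
  | refl => exact ⟨_, _, nil w⟩
  | head hadj _ ih =>
    obtain ⟨vs, es, hw⟩ := ih
    obtain ⟨e, he, hends⟩ := hadj
    exact ⟨_, _, cons e he hends hw⟩

lemma eq_of_nil (h : G.IsWalk S u w vs []) : u = w := by
  cases h; rfl

lemma start_mem (h : G.IsWalk S u w vs es) : u ∈ vs := by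
  cases h <;> simp

lemma end_mem (h : G.IsWalk S u w vs es) : w ∈ vs := by
  induction h with
  | nil => simp
  | cons _ _ _ _ ih => exact List.mem_cons_of_mem _ ih

lemma edges_subset (h : G.IsWalk S u w vs es) : es.toFinset ⊆ S := by
  induction h with
  | nil => simp
  | cons e he _ _ ih => simpa [insert_subset_iff] using ⟨he, ih⟩

lemma mem_of_mem_ends (h : G.IsWalk S u w vs es) {e : G.E} (he : e ∈ es) {x : G.V}
    (hx : x ∈ G.ends e) : x ∈ vs := by
  induction h with
  | nil => simp at he
  | cons f _ hends hw ih =>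
    rcases List.mem_cons.mp he with rfl | he
    · rw [hends, Sym2.mem_iff] at hx
      rcases hx with rfl | rfl
      exacts [List.mem_cons_self, List.mem_cons_of_mem _ hw.start_mem]
    · exact List.mem_cons_of_mem _ (ih he)

lemma mem_of_mem_support (h : G.IsWalk S u w vs es) {x : G.V}
    (hx : x ∈ G.support es.toFinset) : x ∈ vs := by
  obtain ⟨e, he, hxe⟩ := mem_support.mp hx
  exact h.mem_of_mem_ends (List.mem_toFinset.mp he) hxe

lemma reach (h : G.IsWalk S u w vs es) {x : G.V} (hx : x ∈ vs) : G.Reach es.toFinset u x := by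
  induction h with
  | nil => rw [List.mem_singleton.mp hx]; exact .refl
  | cons e _ hends _ ih =>
    rcases List.mem_cons.mp hx with rfl | hx
    · exact .refl
    · exact .head ⟨e, by simp, hends⟩
        (reach_mono (fun g hg => by simp_all) (ih hx))

lemma split (h : G.IsWalk S u w vs es) {z : G.V} (hz : z ∈ vs) :
    ∃ vs₁ es₁ vs₂ es₂,
      G.IsWalk S u z vs₁ es₁ ∧ G.IsWalk S z w vs₂ es₂ ∧ es = es₁ ++ es₂ := by
  induction h with
  | nil => rw [List.mem_singleton.mp hz]; exact ⟨_, _, _, _, nil _, nil _, rfl⟩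
  | cons e he hends hw ih =>
    rcases List.mem_cons.mp hz with rfl | hz
    · exact ⟨_, _, _, _, nil _, cons e he hends hw, rfl⟩
    · obtain ⟨_, es₁, _, es₂, hw₁, hw₂, rfl⟩ := ih hz
      exact ⟨_, _, _, _, cons e he hends hw₁, hw₂, rfl⟩

lemma exists_shorter (h : G.IsWalk S u w vs es) (hnd : ¬ vs.Nodup) :
    ∃ vs' es', G.IsWalk S u w vs' es' ∧ es'.length < es.length := by
  induction h with
  | nil => simp at hnd
  | cons e he hends hw ih =>
    rename_i u' _ _ vs' es'
    by_cases hu : u' ∈ vs'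
    · obtain ⟨_, es₁, _, es₂, -, hw₂, rfl⟩ := hw.split hu
      exact ⟨_, _, hw₂, by simp⟩
    · obtain ⟨_, _, hw', hlt⟩ := ih (by simpa [hu] using hnd)
      exact ⟨_, _, cons e he hends hw', by simpa using hlt⟩

lemma degIn_add (h : G.IsWalk S u w vs es) (hnd : vs.Nodup) (x : G.V) :
    G.degIn es.toFinset x + (if x = u then 1 else 0) + (if x = w then 1 else 0) =
      if x ∈ vs then 2 else 0 := by
  induction h with
  | nil v => by_cases hx : x = v <;> simp [hx, degIn]
  | cons e he hends hw ih =>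
    rename_i u' v' w' vs' es'
    obtain ⟨hu', hnd'⟩ := List.nodup_cons.mp hnd
    have huv : u' ≠ v' := fun h => hu' (h ▸ hw.start_mem)
    have he' : e ∉ es'.toFinset := fun h =>
      hu' (hw.mem_of_mem_ends (List.mem_toFinset.mp h) (hends ▸ Sym2.mem_mk_left _ _))
    have ih := ih hnd'
    rw [List.toFinset_cons, degIn_insert he', endCount_of_ne huv hends]
    by_cases hxu : x = u'
    · subst hxu; simp only [hu', if_false, if_true, huv, List.mem_cons_self] at ih ⊢; omega
    · simp only [hxu, if_false, List.mem_cons, false_or] at ih ⊢; omega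

lemma isPath (h : G.IsWalk S u w vs es) (hnd : vs.Nodup) (huw : u ≠ w) :
    G.IsPath es.toFinset u w := by
  have hdeg := h.degIn_add hnd
  have hmem : ∀ x ∈ vs, x ∈ G.support es.toFinset := fun x hx => by
    have := hdeg x
    have hends : (if x = u then 1 else 0) + (if x = w then 1 else 0) ≤ 1 := by
      split_ifs <;> simp_all
    rw [if_pos hx] at this
    exact degIn_pos_iff.mp (by omega)
  have hu := h.start_mem
  have hw := h.end_mem
  refine ⟨?_, fun a ha b hb => ?_, huw, hmem u hu, hmem w hw, ?_, ?_, fun x hx hxu hxw => ?_⟩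
  · obtain ⟨e, he, -⟩ := mem_support.mp (hmem u hu)
    exact ⟨e, he⟩
  · exact (reach_symm (h.reach (h.mem_of_mem_support ha))).trans
      (h.reach (h.mem_of_mem_support hb))
  · simpa [hu, huw] using hdeg u
  · simpa [hw, huw.symm] using hdeg w
  · simpa [h.mem_of_mem_support hx, hxu, hxw] using hdeg x

end IsWalk

/-- A shortest walk from `A` to `B` is a path meeting `A` and `B` only at its ends. -/
theorem exists_isPath_between {A B : Finset G.V} (hAB : Disjoint A B) {a b : G.V}
    (ha : a ∈ A) (hb : b ∈ B) (hab : G.Reach S a b) :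
    ∃ Q ⊆ S, ∃ u ∈ A, ∃ v ∈ B,
      G.IsPath Q u v ∧ G.support Q ∩ A = {u} ∧ G.support Q ∩ B = {v} := by
  have hex : ∃ n, ∃ u ∈ A, ∃ v ∈ B, ∃ vs es,
      G.IsWalk S u v vs es ∧ es.length = n := by
    obtain ⟨vs, es, hw⟩ := IsWalk.of_reach hab
    exact ⟨_, a, ha, b, hb, vs, es, hw, rfl⟩
  obtain ⟨u, hu, v, hv, vs, es, hw, hlen⟩ := Nat.find_spec hex
  have hmin {u' v' vs' es'} (hu' : u' ∈ A) (hv' : v' ∈ B) (hw' : G.IsWalk S u' v' vs' es') :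
      es.length ≤ es'.length :=
    hlen ▸ Nat.find_min' hex ⟨u', hu', v', hv', vs', es', hw', rfl⟩
  have hnd : vs.Nodup := by
    by_contra hnd
    obtain ⟨_, _, hw', hlt⟩ := hw.exists_shorter hnd
    exact (hmin hu hv hw').not_gt hlt
  have huv : u ≠ v := fun h => disjoint_left.mp hAB hu (h ▸ hv)
  have hA : ∀ z ∈ vs, z ∈ A → z = u := fun z hz hzA => by
    obtain ⟨_, es₁, _, es₂, hw₁, hw₂, rfl⟩ := hw.split hz
    have := hmin hzA hv hw₂
    rw [List.length_append] at this
    rw [List.eq_nil_of_length_eq_zero (by omega : es₁.length = 0)] at hw₁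
    exact hw₁.eq_of_nil.symm
  have hB : ∀ z ∈ vs, z ∈ B → z = v := fun z hz hzB => by
    obtain ⟨_, es₁, _, es₂, hw₁, hw₂, rfl⟩ := hw.split hz
    have := hmin hu hzB hw₁
    rw [List.length_append] at this
    rw [List.eq_nil_of_length_eq_zero (by omega : es₂.length = 0)] at hw₂
    exact hw₂.eq_of_nil
  have hpath := hw.isPath hnd huv
  refine ⟨_, hw.edges_subset, u, hu, v, hv, hpath, ?_, ?_⟩ <;> ext z <;>
    simp only [mem_inter, mem_singleton]
  · exact ⟨fun ⟨hz, hzA⟩ => hA z (hw.mem_of_mem_support hz) hzA,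
      fun h => h ▸ ⟨hpath.2.2.2.1, hu⟩⟩
  · exact ⟨fun ⟨hz, hzB⟩ => hB z (hw.mem_of_mem_support hz) hzB,
      fun h => h ▸ ⟨hpath.2.2.2.2.1, hv⟩⟩

theorem exists_isPath {u v : G.V} (h : G.Reach S u v) (huv : u ≠ v) :
    ∃ P ⊆ S, G.IsPath P u v := by
  obtain ⟨P, hPS, _, hu, _, hv, hP, -⟩ :=
    exists_isPath_between (disjoint_singleton.mpr huv) (mem_singleton_self u)
      (mem_singleton_self v) h
  rw [mem_singleton.mp hu, mem_singleton.mp hv] at hP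
  exact ⟨P, hPS, hP⟩

/-- Two subforests connecting `p` to `q` share the first edge of the unique `p`–`q` path. -/
theorem AcyclicSet.exists_common_edge {T F₁ F₂ : Finset G.E} (hT : G.AcyclicSet T)
    (hF₁ : F₁ ⊆ T) (hF₂ : F₂ ⊆ T) {p q : G.V}
    (h₁ : G.Reach F₁ p q) (h₂ : G.Reach F₂ p q) (hpq : p ≠ q) :
    ∃ g ∈ F₁ ∩ F₂, p ∈ G.ends g := by
  obtain ⟨P₁, hP₁, hpath₁⟩ := exists_isPath h₁ hpq
  obtain ⟨P₂, hP₂, hpath₂⟩ := exists_isPath h₂ hpq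
  have heq := hT.eq_of_isPath (hP₁.trans hF₁) (hP₂.trans hF₂) hpath₁ hpath₂
  obtain ⟨g, hg, hpg⟩ := mem_support.mp hpath₁.2.2.2.1
  exact ⟨g, mem_inter.mpr ⟨hP₁ hg, hP₂ (heq ▸ hg)⟩, hpg⟩

lemma IsPath.symm {P : Finset G.E} {u v : G.V} (h : G.IsPath P u v) : G.IsPath P v u := by
  obtain ⟨hne, hconn, huv, hu, hv, hdu, hdv, hdeg⟩ := h
  exact ⟨hne, hconn, huv.symm, hv, hu, hdv, hdu, fun w hw hwv hwu => hdeg w hw hwu hwv⟩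

lemma IsPath.disjoint_of_support_inter {Q C : Finset G.E} {u v : G.V} (hQ : G.IsPath Q u v)
    (h : G.support Q ∩ G.support C = {u}) : Disjoint Q C := by
  refine disjoint_left.mpr fun g hgQ hgC => ?_
  have hends : ∀ x ∈ G.ends g, x = u := fun x hx =>
    mem_singleton.mp (h ▸ mem_inter.mpr
      ⟨mem_support.mpr ⟨g, hgQ, hx⟩, mem_support.mpr ⟨g, hgC, hx⟩⟩)
  obtain ⟨a, b, hab⟩ := exists_ends_eq g
  have ha := hends a (hab ▸ Sym2.mem_mk_left a b)
  have hb := hends b (hab ▸ Sym2.mem_mk_right a b)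
  rw [ha, hb] at hab
  have := endCount_le_degIn hgQ u
  rw [endCount_of_loop hab, if_pos rfl, hQ.2.2.2.2.2.1] at this
  omega

lemma IsPath.isCircuit_insert {P : Finset G.E} {x y : G.V} (hP : G.IsPath P x y) {e : G.E}
    (he : e ∉ P) (hends : G.ends e = s(x, y)) :
    G.IsCircuit (insert e P) ∧ G.support (insert e P) = G.support P := by
  obtain ⟨-, hconn, hxy, hx, hy, hdx, hdy, hdeg⟩ := hP
  have hsupp : G.support (insert e P) = G.support P := by
    ext v
    simp only [mem_support, mem_insert, exists_eq_or_imp]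
    refine ⟨fun hv => hv.elim (fun hve => ?_) id, .inr⟩
    rw [hends, Sym2.mem_iff] at hve
    rcases hve with rfl | rfl
    exacts [mem_support.mp hx, mem_support.mp hy]
  refine ⟨⟨insert_nonempty _ _, fun u hu v hv => ?_, fun v hv => ?_⟩, hsupp⟩
  · rw [hsupp] at hu hv
    exact reach_mono (subset_insert _ _) (hconn u hu v hv)
  · rw [hsupp] at hv
    rw [degIn_insert he, endCount_of_ne hxy hends]
    by_cases hvx : v = x
    · subst hvx; simp [hdx, hxy]
    by_cases hvy : v = y
    · subst hvy; simp [hdy, hvx]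
    · simp [hvx, hvy, hdeg v hv hvx hvy]

structure IsFundamentalCircuit (G : SignedMultigraph) (T : Finset G.E) (e : G.E)
    (C : Finset G.E) : Prop where
  mem : e ∈ C
  erase_subset : C.erase e ⊆ T
  isCircuit : G.IsCircuit C
  reach : ∀ u ∈ G.support C, ∀ v ∈ G.support C, G.Reach (C.erase e) u v

theorem exists_isFundamentalCircuit {T : Finset G.E} (hT : ∀ u v, G.Reach T u v) {e : G.E}
    (he : e ∉ T) : ∃ C, G.IsFundamentalCircuit T e C := by
  obtain ⟨x, y, hxy⟩ := exists_ends_eq e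
  by_cases hloop : x = y
  · subst hloop
    have hsupp : ∀ u ∈ G.support {e}, u = x := fun u hu => by
      simpa [mem_support, hxy] using hu
    have hreach (S : Finset G.E) :
        ∀ u ∈ G.support {e}, ∀ v ∈ G.support {e}, G.Reach S u v :=
      fun u hu v hv => hsupp u hu ▸ hsupp v hv ▸ .refl
    refine ⟨{e}, mem_singleton_self e, by simp, ⟨singleton_nonempty e, hreach _, ?_⟩,
      hreach _⟩
    intro v hv
    simp [hsupp v hv, degIn_eq_sum, endCount_of_loop hxy]
  · obtain ⟨P, hPT, hP⟩ := exists_isPath (hT x y) hloop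
    have heP : e ∉ P := fun h => he (hPT h)
    obtain ⟨hC, hsupp⟩ := hP.isCircuit_insert heP hxy
    refine ⟨insert e P, mem_insert_self e P, by rwa [erase_insert heP], hC, ?_⟩
    rw [erase_insert heP, hsupp]
    exact hP.2.1

namespace IsFundamentalCircuit

variable {T C C₁ C₂ : Finset G.E} {e e₁ e₂ : G.E}

lemma mem_or_mem (hC : G.IsFundamentalCircuit T e C) {g : G.E} (hg : g ∈ C) :
    g = e ∨ g ∈ T :=
  (eq_or_ne g e).imp_right fun hne => hC.erase_subset (mem_erase.mpr ⟨hne, hg⟩)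

lemma negEdges_eq (hC : G.IsFundamentalCircuit (univ \ G.negEdges univ) e C)
    (he : e ∈ G.negEdges univ) : G.negEdges C = {e} := by
  ext g
  simp only [negEdges, mem_filter, mem_singleton]
  refine ⟨fun ⟨hg, hneg⟩ => (hC.mem_or_mem hg).resolve_right fun hgT => ?_, ?_⟩
  · simp [negEdges, hneg] at hgT
  · rintro rfl
    exact ⟨hC.mem, (mem_filter.mp he).2⟩

lemma isUnbalancedCircuit (hC : G.IsFundamentalCircuit (univ \ G.negEdges univ) e C)
    (he : e ∈ G.negEdges univ) : G.IsUnbalancedCircuit C :=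
  ⟨hC.isCircuit, by rw [hC.negEdges_eq he, card_singleton]; decide⟩

lemma exists_common_edge (hT : G.AcyclicSet T) (h₁ : G.IsFundamentalCircuit T e₁ C₁)
    (h₂ : G.IsFundamentalCircuit T e₂ C₂) {p q : G.V} (hp₁ : p ∈ G.support C₁)
    (hp₂ : p ∈ G.support C₂) (hq₁ : q ∈ G.support C₁) (hq₂ : q ∈ G.support C₂)
    (hpq : p ≠ q) : ∃ g ∈ C₁ ∩ C₂, p ∈ G.ends g := by
  obtain ⟨g, hg, hpg⟩ := hT.exists_common_edge h₁.erase_subset h₂.erase_subset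
    (h₁.reach p hp₁ q hq₁) (h₂.reach p hp₂ q hq₂) hpq
  exact ⟨g, inter_subset_inter (Finset.erase_subset _ _) (Finset.erase_subset _ _) hg, hpg⟩

lemma card_support_inter_le_one (hT : G.AcyclicSet T) (h₁ : G.IsFundamentalCircuit T e₁ C₁)
    (h₂ : G.IsFundamentalCircuit T e₂ C₂) (hdisj : Disjoint C₁ C₂) :
    #(G.support C₁ ∩ G.support C₂) ≤ 1 := by
  refine card_le_one.mpr fun p hp q hq => by_contra fun hpq => ?_
  rw [mem_inter] at hp hq
  obtain ⟨g, hg, -⟩ := h₁.exists_common_edge hT h₂ hp.1 hp.2 hq.1 hq.2 hpq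
  exact disjoint_left.mp hdisj (mem_inter.mp hg).1 (mem_inter.mp hg).2

lemma mem_symmDiff_left (h₁ : G.IsFundamentalCircuit T e₁ C₁)
    (h₂ : G.IsFundamentalCircuit T e₂ C₂)
    (he₁ : e₁ ∉ T) (hne : e₁ ≠ e₂) : e₁ ∈ C₁ ∆ C₂ :=
  mem_symmDiff.mpr (.inl ⟨h₁.mem, fun h => (h₂.mem_or_mem h).elim hne he₁⟩)

theorem connOn_symmDiff (hT : G.AcyclicSet T) (h₁ : G.IsFundamentalCircuit T e₁ C₁)
    (h₂ : G.IsFundamentalCircuit T e₂ C₂) (he₁ : e₁ ∉ T) (hne : e₁ ≠ e₂)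
    (hshare : (C₁ ∩ C₂).Nonempty) : G.ConnOn (C₁ ∆ C₂) := by
  set D := C₁ ∆ C₂
  have hD : G.EvenDegrees D := h₁.isCircuit.evenDegrees.symmDiff h₂.isCircuit.evenDegrees
  have hout : ∀ g ∈ D, g ∉ T → g = e₁ ∨ g = e₂ := fun g hg hgT => by
    rcases mem_symmDiff.mp hg with ⟨hg, -⟩ | ⟨hg, -⟩
    exacts [.inl ((h₁.mem_or_mem hg).resolve_right hgT),
      .inr ((h₂.mem_or_mem hg).resolve_right hgT)]
  obtain ⟨x, y, hxy⟩ := exists_ends_eq e₁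
  set K := G.compEdges D x
  have hKD : K ⊆ D := filter_subset _ _
  have hK : G.EvenDegrees K := hD.compEdges x
  have he₁K : e₁ ∈ K :=
    mem_compEdges (h₁.mem_symmDiff_left h₂ he₁ hne) (hxy ▸ Sym2.mem_mk_left x y)
  -- Otherwise `K` and `C₁` would agree outside the tree, forcing `K = C₁ ⊆ D`.
  have he₂K : e₂ ∈ K := by
    by_contra he₂K
    have hKC : K = C₁ := hT.eq_of_evenDegrees hK h₁.isCircuit.evenDegrees fun g hgT => by
      refine ⟨fun hg => ?_, fun hg => ?_⟩
      · rcases hout g (hKD hg) hgT with rfl | rfl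
        exacts [h₁.mem, absurd hg he₂K]
      · exact (h₁.mem_or_mem hg).resolve_right hgT ▸ he₁K
    obtain ⟨g, hg⟩ := hshare
    rcases mem_symmDiff.mp (hKD (hKC ▸ (mem_inter.mp hg).1)) with h | h
    exacts [h.2 (mem_inter.mp hg).2, h.2 (mem_inter.mp hg).1]
  have hrest : D \ K = ∅ :=
    hT.eq_of_evenDegrees (hD.sdiff hK hKD) (fun _ => by simp [degIn]) fun g hgT => by
      simp only [mem_sdiff, notMem_empty, iff_false, not_and, not_not]
      intro hg
      rcases hout g hg hgT with rfl | rfl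
      exacts [he₁K, he₂K]
  exact connOn_of_compEdges_eq (Subset.antisymm hKD (sdiff_eq_empty_iff_subset.mp hrest))

theorem degIn_symmDiff (hT : G.AcyclicSet T) (h₁ : G.IsFundamentalCircuit T e₁ C₁)
    (h₂ : G.IsFundamentalCircuit T e₂ C₂) (hshare : (C₁ ∩ C₂).Nonempty) {v : G.V}
    (hv : v ∈ G.support (C₁ ∆ C₂)) : G.degIn (C₁ ∆ C₂) v = 2 := by
  have hsum := degIn_symmDiff_add C₁ C₂ v
  have hpos := degIn_pos_iff.mpr hv
  rw [h₁.isCircuit.degIn_eq, h₂.isCircuit.degIn_eq] at hsum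
  by_cases hv₁ : v ∈ G.support C₁ <;> by_cases hv₂ : v ∈ G.support C₂ <;>
    simp only [hv₁, hv₂, if_true, if_false] at hsum
  · suffices 0 < G.degIn (C₁ ∩ C₂) v by omega
    obtain ⟨g, hg⟩ := hshare
    obtain ⟨a, b, hab⟩ := exists_ends_eq g
    have ha : a ∈ G.ends g := hab ▸ Sym2.mem_mk_left a b
    by_cases hva : v = a
    · exact degIn_pos_iff.mpr (mem_support.mpr ⟨g, hg, hva ▸ ha⟩)
    obtain ⟨g', hg', hvg'⟩ := h₁.exists_common_edge hT h₂ hv₁ hv₂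
      (mem_support.mpr ⟨g, (mem_inter.mp hg).1, ha⟩)
      (mem_support.mpr ⟨g, (mem_inter.mp hg).2, ha⟩) hva
    exact degIn_pos_iff.mpr (mem_support.mpr ⟨g', hg', hvg'⟩)
  all_goals omega

theorem isBalancedCircuit_symmDiff (hT : G.AcyclicSet (univ \ G.negEdges univ))
    (h₁ : G.IsFundamentalCircuit (univ \ G.negEdges univ) e₁ C₁)
    (h₂ : G.IsFundamentalCircuit (univ \ G.negEdges univ) e₂ C₂)
    (he₁ : e₁ ∈ G.negEdges univ) (he₂ : e₂ ∈ G.negEdges univ) (hne : e₁ ≠ e₂)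
    (hshare : (C₁ ∩ C₂).Nonempty) : G.IsBalancedCircuit (C₁ ∆ C₂) := by
  have he₁T : e₁ ∉ univ \ G.negEdges univ := fun h => (mem_sdiff.mp h).2 he₁
  refine ⟨⟨⟨e₁, h₁.mem_symmDiff_left h₂ he₁T hne⟩,
    h₁.connOn_symmDiff hT h₂ he₁T hne hshare,
    fun v hv => h₁.degIn_symmDiff hT h₂ hshare hv⟩, ?_⟩
  have hneg : G.negEdges (C₁ ∆ C₂) = {e₁, e₂} := by
    ext g
    have hN₁ := Finset.ext_iff.mp (h₁.negEdges_eq he₁) g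
    have hN₂ := Finset.ext_iff.mp (h₂.negEdges_eq he₂) g
    simp only [negEdges, mem_filter, mem_symmDiff, mem_insert, mem_singleton] at hN₁ hN₂ ⊢
    grind
  rw [hneg, card_pair hne]
  decide

end IsFundamentalCircuit

theorem exists_isLongBarbell {S C₁ C₂ : Finset G.E} (hS : ∀ u v, G.Reach S u v)
    (h₁ : G.IsUnbalancedCircuit C₁) (h₂ : G.IsUnbalancedCircuit C₂)
    (hdisj : Disjoint (G.support C₁) (G.support C₂)) :
    ∃ Q, G.IsLongBarbell (C₁ ∪ C₂ ∪ Q) := by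
  obtain ⟨a, ha⟩ := h₁.1.support_nonempty
  obtain ⟨b, hb⟩ := h₂.1.support_nonempty
  obtain ⟨Q, -, u, -, v, -, hQ, hQ₁, hQ₂⟩ := exists_isPath_between hdisj ha hb (hS a b)
  exact ⟨Q, C₁, C₂, Q, u, v, h₁, h₂, hdisj, hQ, hQ₁, hQ₂,
    hQ.disjoint_of_support_inter hQ₁,
    hQ.symm.disjoint_of_support_inter hQ₂, rfl⟩

end SignedMultigraph

open SignedMultigraph

theorem signed_circuit_contains_SSet_general (G : SignedMultigraph)
    (hn : 2 ≤ (G.negEdges Finset.univ).card)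
    (htree : G.IsSpanningTree (Finset.univ \ G.negEdges Finset.univ)) :
    ∀ e ∈ G.negEdges Finset.univ,
      ∃ S : Finset G.E, G.IsSignedCircuit S ∧ G.SSet e ⊆ S := by
  obtain ⟨hacyc, -, hspan⟩ := htree
  intro e he
  obtain ⟨e', he', hne⟩ := exists_mem_ne hn e
  have hnotT {f : G.E} (hf : f ∈ G.negEdges univ) : f ∉ univ \ G.negEdges univ :=
    fun h => (mem_sdiff.mp h).2 hf
  obtain ⟨C₁, hC₁⟩ := exists_isFundamentalCircuit hspan (hnotT he)
  obtain ⟨C₂, hC₂⟩ := exists_isFundamentalCircuit hspan (hnotT he')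
  by_cases hshare : (C₁ ∩ C₂).Nonempty
  · refine ⟨C₁ ∆ C₂,
      .inl (hC₁.isBalancedCircuit_symmDiff hacyc hC₂ he he' hne.symm hshare),
      SSet_subset_of_evenDegrees ?_ (hC₁.mem_symmDiff_left hC₂ (hnotT he) hne.symm)⟩
    exact hC₁.isCircuit.evenDegrees.symmDiff hC₂.isCircuit.evenDegrees
  have hdisj : Disjoint C₁ C₂ :=
    disjoint_iff_inter_eq_empty.mpr (not_nonempty_iff_eq_empty.mp hshare)
  have hSC₁ : G.SSet e ⊆ C₁ :=
    SSet_subset_of_evenDegrees hC₁.isCircuit.evenDegrees hC₁.mem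
  have hu₁ := hC₁.isUnbalancedCircuit he
  have hu₂ := hC₂.isUnbalancedCircuit he'
  rcases Nat.le_one_iff_eq_zero_or_eq_one.mp (hC₁.card_support_inter_le_one hacyc hC₂ hdisj)
    with h0 | h1
  · obtain ⟨Q, hQ⟩ := exists_isLongBarbell hspan hu₁ hu₂
      (disjoint_iff_inter_eq_empty.mpr (card_eq_zero.mp h0))
    exact ⟨_, .inr (.inr hQ), hSC₁.trans (subset_union_left.trans subset_union_left)⟩
  · exact ⟨_, .inr (.inl ⟨C₁, C₂, hu₁, hu₂, hdisj, h1, rfl⟩),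
      hSC₁.trans subset_union_left⟩

/-- Let `H` be a 2-edge-connected signed graph with
`|E_N(H)| ≥ 2` such that `H − E_N(H)` is a spanning tree of `H`. Then for every
negative edge `e`, `H` has a signed circuit containing all edges of `S_H(e)`. -/
theorem signed_circuit_contains_SSet (G : SignedMultigraph)
    (h2ec : G.TwoEdgeConnected)
    (hn : 2 ≤ (G.negEdges Finset.univ).card)
    (htree : G.IsSpanningTree (Finset.univ \ G.negEdges Finset.univ)) :
    ∀ e ∈ G.negEdges Finset.univ,
      ∃ S : Finset G.E, G.IsSignedCircuit S ∧ G.SSet e ⊆ S :=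
  signed_circuit_contains_SSet_general G hn htree
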